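/- arXiv:1207.4255 — 2 statements merged into one kernel-verified Lean document; each statement's English description precedes it below -/
import Mathlib

section
/- Let q ∈ R^K with q_k > 0 for all k, c ∈ R^K, and ρ > 0, and consider f_∞(x) = (1/2) xᵀ diag(q) x − cᵀ x + ρ ‖x‖_∞. (i) If ‖c‖_1 ≤ ρ, then x* = 0 minimizes f_∞ over R^K. (ii) If ‖c‖_1 > ρ and c_k ≠ 0 for all k, let π be a permutation sorting |c_{π_1}|/q_{π_1} ≥ … ≥ |c_{π_K}|/q_{π_K} (with (K+1)-st breakpoint 0), and let k* and ν* = (Σ_{k=1}^{k*} |c_{π_k}| − ρ)/(Σ_{k=1}^{k*} q_{π_k}) satisfy |c_{π_{k*}}|/q_{π_{k*}} ≥ ν* ≥ |c_{π_{k*+1}}|/q_{π_{k*+1}}. Then the vector x* defined by x*_{π_k} = c_{π_k}/q_{π_k} for k > k* and x*_{π_k} = sgn(c_{π_k}) ν* for k ≤ k* minimizes f_∞ over R^K. -/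
/-! The vector `g = c - diag(q) x*` is a subgradient of `ρ ‖·‖_∞` at `x*`: its dual norm
`‖g‖₁` is at most `ρ` and `gᵀ x* ≥ ρ ‖x*‖_∞`. Since the quadratic part lies above its tangent
at `x*`, this makes `x*` a minimizer. For `x* = 0` the subgradient is `c` itself; for the
clipped vector of part (ii) `g` vanishes on the free coordinates, and on the clipped ones
`|g_k| ≤ |c_k| - q_k ν*`, and these bounds sum to `ρ` by the definition of `ν*`. -/

open Finset

lemma Real.abs_sign_le_one (r : ℝ) : |Real.sign r| ≤ 1 := by
  rcases Real.sign_apply_eq r with h | h | h <;> simp [h]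

lemma abs_sub_mul_sign_mul_le {c q ν : ℝ} (h : q * ν ≤ |c|) :
    |c - q * (Real.sign c * ν)| ≤ |c| - q * ν := by
  rcases lt_trichotomy c 0 with hc | rfl | hc
  · rw [Real.sign_of_neg hc, abs_of_neg hc, abs_of_nonpos] <;> linarith [abs_of_neg hc]
  · simpa using h
  · rw [Real.sign_of_pos hc, abs_of_pos hc, abs_of_nonneg] <;> linarith [abs_of_pos hc]

lemma sub_mul_le_sub_mul_sign_mul_mul {c q ν : ℝ} (hq : 0 ≤ q) (hν : 0 ≤ ν)
    (h : q * ν ≤ |c|) :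
    (|c| - q * ν) * ν ≤ (c - q * (Real.sign c * ν)) * (Real.sign c * ν) := by
  rcases lt_trichotomy c 0 with hc | rfl | hc
  · rw [Real.sign_of_neg hc, abs_of_neg hc]; ring_nf; rfl
  · simp only [abs_zero, Real.sign_zero] at h ⊢
    nlinarith [mul_nonneg hq hν]
  · rw [Real.sign_of_pos hc, abs_of_pos hc]; ring_nf; rfl

section

variable {ι : Type*} [Fintype ι]

lemma abs_le_iSup_abs (x : ι → ℝ) (i : ι) : |x i| ≤ ⨆ j, |x j| :=
  le_ciSup (f := fun j => |x j|) (Set.finite_range _).bddAbove i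

lemma sum_mul_le_of_sum_abs_le {g : ι → ℝ} {ρ : ℝ} (hg : ∑ i, |g i| ≤ ρ) (x : ι → ℝ) :
    ∑ i, g i * x i ≤ ρ * ⨆ i, |x i| :=
  calc ∑ i, g i * x i ≤ ∑ i, |g i| * ⨆ j, |x j| := by
        refine sum_le_sum fun i _ => ?_
        calc g i * x i ≤ |g i| * |x i| := (le_abs_self _).trans (abs_mul _ _).le
          _ ≤ |g i| * ⨆ j, |x j| := by gcongr; exact abs_le_iSup_abs x i
    _ = (∑ i, |g i|) * ⨆ j, |x j| := (sum_mul _ _ _).symm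
    _ ≤ ρ * ⨆ j, |x j| := by gcongr; exact Real.iSup_nonneg fun _ => abs_nonneg _

theorem isMinOn_of_subgradient {q c xs : ι → ℝ} {ρ : ℝ} (hq : ∀ i, 0 ≤ q i)
    (hnorm : ∑ i, |c i - q i * xs i| ≤ ρ)
    (hinner : ρ * ⨆ i, |xs i| ≤ ∑ i, (c i - q i * xs i) * xs i) :
    IsMinOn (fun x : ι → ℝ => (1 / 2) * ∑ i, q i * x i ^ 2 - ∑ i, c i * x i + ρ * ⨆ i, |x i|)
      Set.univ xs := by
  refine isMinOn_univ_iff.mpr fun x => ?_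
  have htangent : ∀ i, (1 / 2) * (q i * xs i ^ 2) - c i * xs i
      ≤ (1 / 2) * (q i * x i ^ 2) - c i * x i + (c i - q i * xs i) * (x i - xs i) := fun i => by
    nlinarith [mul_nonneg (hq i) (sq_nonneg (x i - xs i))]
  have hquad := sum_le_sum fun i (_ : i ∈ univ) => htangent i
  simp only [sum_add_distrib, sum_sub_distrib, ← mul_sum, mul_sub] at hquad
  have hsub := sum_mul_le_of_sum_abs_le hnorm x
  linarith

theorem isMinOn_zero_of_sum_abs_le {q c : ι → ℝ} {ρ : ℝ} (hq : ∀ i, 0 ≤ q i)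
    (hc : ∑ i, |c i| ≤ ρ) :
    IsMinOn (fun x : ι → ℝ => (1 / 2) * ∑ i, q i * x i ^ 2 - ∑ i, c i * x i + ρ * ⨆ i, |x i|)
      Set.univ 0 :=
  isMinOn_of_subgradient hq (by simpa using hc) (by simp)

theorem isMinOn_clip {q c : ι → ℝ} (hq : ∀ i, 0 < q i)
    (free : ι → Prop) [DecidablePred free] {ν ρ : ℝ} (hν : 0 ≤ ν)
    (hfree : ∀ i, free i → |c i| / q i ≤ ν) (hclip : ∀ i, ¬free i → ν ≤ |c i| / q i)
    (hρ : ∑ i ∈ univ.filter (fun i => ¬free i), (|c i| - q i * ν) = ρ) :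
    IsMinOn (fun x : ι → ℝ => (1 / 2) * ∑ i, q i * x i ^ 2 - ∑ i, c i * x i + ρ * ⨆ i, |x i|)
      Set.univ (fun i => if free i then c i / q i else Real.sign (c i) * ν) := by
  set xs : ι → ℝ := fun i => if free i then c i / q i else Real.sign (c i) * ν
  have hclip' : ∀ i, ¬free i → q i * ν ≤ |c i| := fun i hi =>
    (le_div_iff₀' (hq i)).mp (hclip i hi)
  have hresidual_free : ∀ i, free i → c i - q i * xs i = 0 := fun i hi => by
    simp only [xs, if_pos hi, mul_div_cancel₀ _ (hq i).ne', sub_self]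
  have hρ' : ρ = ∑ i, if free i then 0 else |c i| - q i * ν := by
    rw [← hρ, sum_filter, sum_congr rfl fun i _ => ite_not _ _ _]
  have hρ_nonneg : 0 ≤ ρ := hρ ▸ sum_nonneg fun i hi =>
    sub_nonneg.mpr (hclip' i (mem_filter.mp hi).2)
  have hsup : ⨆ i, |xs i| ≤ ν := Real.iSup_le (fun i => by
    by_cases hi : free i
    · simpa only [xs, if_pos hi, abs_div, abs_of_pos (hq i)] using hfree i hi
    · simp only [xs, if_neg hi, abs_mul, abs_of_nonneg hν]
      exact mul_le_of_le_one_left hν (Real.abs_sign_le_one _)) hν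
  refine isMinOn_of_subgradient (fun i => (hq i).le) (hρ' ▸ sum_le_sum fun i _ => ?_) ?_
  · by_cases hi : free i
    · simp [hresidual_free i hi, hi]
    · simpa only [xs, if_neg hi] using abs_sub_mul_sign_mul_le (hclip' i hi)
  · calc ρ * ⨆ i, |xs i| ≤ ρ * ν := mul_le_mul_of_nonneg_left hsup hρ_nonneg
      _ = ∑ i, (if free i then 0 else |c i| - q i * ν) * ν := by rw [hρ', sum_mul]
      _ ≤ ∑ i, (c i - q i * xs i) * xs i := sum_le_sum fun i _ => by
        by_cases hi : free i
        · simp [hresidual_free i hi, hi]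
        · simpa only [xs, if_neg hi] using
            sub_mul_le_sub_mul_sign_mul_mul (hq i).le hν (hclip' i hi)

end

theorem linf_quad_solution_general (K : ℕ) (q c : Fin K → ℝ)
    (hq : ∀ k, 0 < q k) (ρ : ℝ) :
    ((∑ k, |c k| ≤ ρ) →
      IsMinOn
        (fun x : Fin K → ℝ =>
          (1 / 2) * ∑ k, q k * x k ^ 2 - ∑ k, c k * x k + ρ * ⨆ k, |x k|)
        (Set.univ : Set (Fin K → ℝ)) 0) ∧
    (ρ < ∑ k, |c k| → (∀ k, c k ≠ 0) →
      ∀ π : Equiv.Perm (Fin K),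
        (∀ i j : Fin K, i ≤ j → |c (π j)| / q (π j) ≤ |c (π i)| / q (π i)) →
        ∀ (kstar : Fin K) (νs : ℝ),
          νs = (∑ k ∈ Finset.Iic kstar, |c (π k)| - ρ) /
              ∑ k ∈ Finset.Iic kstar, q (π k) →
          νs ≤ |c (π kstar)| / q (π kstar) →
          (∀ j : Fin K, kstar < j → |c (π j)| / q (π j) ≤ νs) →
          0 ≤ νs →
          IsMinOn
            (fun x : Fin K → ℝ =>
              (1 / 2) * ∑ k, q k * x k ^ 2 - ∑ k, c k * x k + ρ * ⨆ k, |x k|)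
            (Set.univ : Set (Fin K → ℝ))
            (fun i => if kstar < π.symm i then c i / q i else Real.sign (c i) * νs)) := by
  refine ⟨isMinOn_zero_of_sum_abs_le fun k => (hq k).le, ?_⟩
  intro _ _ π hsorted kstar νs hνs hν_le hν_ge hν_nonneg
  have hqsum : 0 < ∑ k ∈ Iic kstar, q (π k) :=
    sum_pos (fun k _ => hq (π k)) ⟨kstar, mem_Iic.mpr le_rfl⟩
  have hρ : ∑ k ∈ Iic kstar, (|c (π k)| - q (π k) * νs) = ρ := by
    rw [sum_sub_distrib, ← sum_mul, hνs, mul_div_cancel₀ _ hqsum.ne']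
    ring
  refine isMinOn_clip hq (fun i => kstar < π.symm i) hν_nonneg
    (fun i hi => by simpa using hν_ge _ hi)
    (fun i hi => by simpa using hν_le.trans (hsorted _ _ (not_lt.mp hi))) ?_
  rw [← hρ]
  exact (sum_equiv π (fun k => by simp) fun _ _ => rfl).symm

/-- the minimizer of the `ℓ_∞` regularized separable quadratic objective
`f_∞(x) = (1/2) xᵀ diag(q) x − cᵀ x + ρ ‖x‖_∞`:
(i) if `‖c‖₁ ≤ ρ` then `x* = 0` minimizes `f_∞`;
(ii) if `‖c‖₁ > ρ`, all `c_k ≠ 0`, the breakpoints are sorted decreasingly by `π`, and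
`k*, ν*` satisfy the bracketing condition, then `x*` given by `x*_{π k} = c_{π k}/q_{π k}` for
`k > k*` and `x*_{π k} = sgn(c_{π k}) ν*` for `k ≤ k*` minimizes `f_∞`. -/
theorem linf_quad_solution (K : ℕ) (q c : Fin K → ℝ)
    (hq : ∀ k, 0 < q k) (ρ : ℝ) (hρ : 0 < ρ) :
    ((∑ k, |c k| ≤ ρ) →
      IsMinOn
        (fun x : Fin K → ℝ =>
          (1 / 2) * ∑ k, q k * x k ^ 2 - ∑ k, c k * x k + ρ * ⨆ k, |x k|)
        (Set.univ : Set (Fin K → ℝ)) 0) ∧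
    (ρ < ∑ k, |c k| → (∀ k, c k ≠ 0) →
      ∀ π : Equiv.Perm (Fin K),
        (∀ i j : Fin K, i ≤ j → |c (π j)| / q (π j) ≤ |c (π i)| / q (π i)) →
        ∀ (kstar : Fin K) (νs : ℝ),
          νs = (∑ k ∈ Finset.Iic kstar, |c (π k)| - ρ) /
              ∑ k ∈ Finset.Iic kstar, q (π k) →
          νs ≤ |c (π kstar)| / q (π kstar) →
          (∀ j : Fin K, kstar < j → |c (π j)| / q (π j) ≤ νs) →
          0 ≤ νs →
          IsMinOn
            (fun x : Fin K → ℝ =>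
              (1 / 2) * ∑ k, q k * x k ^ 2 - ∑ k, c k * x k + ρ * ⨆ k, |x k|)
            (Set.univ : Set (Fin K → ℝ))
            (fun i => if kstar < π.symm i then c i / q i else Real.sign (c i) * νs)) :=
  linf_quad_solution_general K q c hq ρ
end

section
/- Let q, c, b ∈ R^K with q_k > 0, c_k > 0, b_k > 0 for all k, and let ρ > 0. For λ > 0 define r(λ) ∈ R^K componentwise by r_k(λ) = (b_k − λ c_k + sqrt((b_k + λ c_k)² + 4 λ q_k)) / (2λ); each r_k(λ) is strictly positive. If λ > 0 satisfies ‖r(λ)‖_2 = ρ, then r(λ) minimizes the separable logarithmic trust-region objective −Σ_k q_k log(r_k + c_k) − bᵀ r over the set {r ∈ R^K : r ≥ 0 componentwise, ‖r‖_2 ≤ ρ}. -/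
/-!
The root `r_k(λ)` of the quadratic `λ r (r + c_k) = q_k + b_k (r + c_k)` is the stationary point
of the convex coordinate Lagrangian `−q_k log (r + c_k) − b_k r + (λ/2) r²`, hence its global
minimizer on `r > −c_k`. Weak duality finishes: since `‖r(λ)‖ = ρ`, the penalty `(λ/2) ‖r‖²` is
maximal over the feasible set at `r(λ)`, so minimizing objective plus penalty there minimizes the
objective.
-/

open Real Finset

lemma Real.log_le_log_add_sub_div {x y : ℝ} (hx : 0 < x) (hy : 0 < y) :
    log y ≤ log x + (y - x) / x := by
  have h := log_le_sub_one_of_pos (div_pos hy hx)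
  rw [log_div hy.ne' hx.ne', div_sub_one hx.ne'] at h
  linarith

lemma IsMinOn.of_add_mul_of_isMaxOn {α : Type*} {f g : α → ℝ} {S : Set α} {s : α} {lam : ℝ}
    (hlam : 0 ≤ lam) (hmin : IsMinOn (fun x => f x + lam * g x) S s) (hmax : IsMaxOn g S s) :
    IsMinOn f S s := by
  intro x hx
  have hLx : f s + lam * g s ≤ f x + lam * g x := hmin hx
  have hgx : lam * g x ≤ lam * g s := mul_le_mul_of_nonneg_left (hmax hx) hlam
  show f s ≤ f x
  linarith

noncomputable def logLagrangian (q c b lam t : ℝ) : ℝ :=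
  -q * log (t + c) - b * t + lam / 2 * t ^ 2

/-- `hstat` is the stationarity condition `q / (s + c) + b = λ s` cleared of denominators. -/
lemma logLagrangian_le_of_stationary {q c b lam s t : ℝ} (hq : 0 ≤ q) (hlam : 0 ≤ lam)
    (hs : 0 < s + c) (ht : 0 < t + c) (hstat : q = (lam * s - b) * (s + c)) :
    logLagrangian q c b lam s ≤ logLagrangian q c b lam t := by
  have hlog : q * log (t + c) ≤ q * log (s + c) + (lam * s - b) * (t - s) := by
    calc q * log (t + c) ≤ q * (log (s + c) + ((t + c) - (s + c)) / (s + c)) :=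
          mul_le_mul_of_nonneg_left (log_le_log_add_sub_div hs ht) hq
      _ = q * log (s + c) + (lam * s - b) * (t - s) := by
          rw [hstat]; field_simp; ring
  unfold logLagrangian
  nlinarith [mul_nonneg hlam (sq_nonneg (t - s))]

/-- The positive root of `λ r² + (λ c − b) r − (q + b c) = 0`. -/
noncomputable def logTrustRoot (q c b lam : ℝ) : ℝ :=
  (b - lam * c + √((b + lam * c) ^ 2 + 4 * lam * q)) / (2 * lam)

lemma logTrustRoot_pos {q c b lam : ℝ} (hq : 0 < q) (hb : 0 ≤ b) (hlam : 0 < lam) :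
    0 < logTrustRoot q c b lam := by
  have hsqrt : |b + lam * c| < √((b + lam * c) ^ 2 + 4 * lam * q) := by
    rw [← sqrt_sq_eq_abs]
    exact sqrt_lt_sqrt (sq_nonneg _) (by nlinarith)
  unfold logTrustRoot
  apply div_pos _ (by linarith)
  linarith [le_abs_self (b + lam * c)]

lemma logTrustRoot_stationary {q c b lam : ℝ} (hq : 0 ≤ q) (hlam : 0 < lam) :
    q = (lam * logTrustRoot q c b lam - b) * (logTrustRoot q c b lam + c) := by
  have hsq := sq_sqrt (show 0 ≤ (b + lam * c) ^ 2 + 4 * lam * q by positivity)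
  unfold logTrustRoot
  generalize √((b + lam * c) ^ 2 + 4 * lam * q) = D at hsq ⊢
  field_simp
  linear_combination -hsq

lemma sum_logLagrangian {ι : Type*} [Fintype ι] (q c b r : ι → ℝ) (lam : ℝ) :
    ∑ k, logLagrangian (q k) (c k) (b k) lam (r k) =
      (-∑ k, q k * log (r k + c k) - ∑ k, b k * r k) + lam / 2 * ∑ k, r k ^ 2 := by
  simp only [logLagrangian, sum_add_distrib, sum_sub_distrib, ← mul_sum, neg_mul, sum_neg_distrib]

lemma isMinOn_logLagrangian_logTrustRoot {ι : Type*} [Fintype ι] {q c b : ι → ℝ} {lam : ℝ}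
    (hq : ∀ k, 0 < q k) (hc : ∀ k, 0 < c k) (hb : ∀ k, 0 ≤ b k) (hlam : 0 < lam)
    {S : Set (ι → ℝ)} (hS : ∀ r ∈ S, ∀ k, 0 < r k + c k) :
    IsMinOn (fun r => (-∑ k, q k * log (r k + c k) - ∑ k, b k * r k) + lam / 2 * ∑ k, r k ^ 2) S
      (fun k => logTrustRoot (q k) (c k) (b k) lam) := by
  intro r hr
  have h := sum_le_sum (s := univ) fun k _ => logLagrangian_le_of_stationary (hq k).le hlam.le
    (by linarith [logTrustRoot_pos (c := c k) (hq k) (hb k) hlam, hc k]) (hS r hr k)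
    (logTrustRoot_stationary (hq k).le hlam)
  rwa [sum_logLagrangian, sum_logLagrangian] at h

theorem log_trust_region_solution_general (K : ℕ) (q c b : Fin K → ℝ)
    (hq : ∀ k, 0 < q k) (hc : ∀ k, 0 < c k) (hb : ∀ k, 0 < b k)
    (ρ : ℝ) (lam : ℝ) (hlam : 0 < lam) :
    (∀ k, 0 < (b k - lam * c k + Real.sqrt ((b k + lam * c k) ^ 2 + 4 * lam * q k))
        / (2 * lam)) ∧
    (Real.sqrt (∑ k, ((b k - lam * c k +
          Real.sqrt ((b k + lam * c k) ^ 2 + 4 * lam * q k)) / (2 * lam)) ^ 2) = ρ →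
      ((∀ k, (0 : ℝ) ≤ (b k - lam * c k +
            Real.sqrt ((b k + lam * c k) ^ 2 + 4 * lam * q k)) / (2 * lam)) ∧
        Real.sqrt (∑ k, ((b k - lam * c k +
            Real.sqrt ((b k + lam * c k) ^ 2 + 4 * lam * q k)) / (2 * lam)) ^ 2) ≤ ρ) ∧
      IsMinOn
        (fun r : Fin K → ℝ => -∑ k, q k * Real.log (r k + c k) - ∑ k, b k * r k)
        {r : Fin K → ℝ | (∀ k, 0 ≤ r k) ∧ Real.sqrt (∑ k, r k ^ 2) ≤ ρ}
        (fun k => (b k - lam * c k +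
            Real.sqrt ((b k + lam * c k) ^ 2 + 4 * lam * q k)) / (2 * lam))) := by
  have hpos k : 0 < logTrustRoot (q k) (c k) (b k) lam := logTrustRoot_pos (hq k) (hb k).le hlam
  refine ⟨hpos, fun hnorm => ⟨⟨fun k => (hpos k).le, hnorm.le⟩, ?_⟩⟩
  refine IsMinOn.of_add_mul_of_isMaxOn (by positivity : 0 ≤ lam / 2)
    (isMinOn_logLagrangian_logTrustRoot hq hc (fun k => (hb k).le) hlam
      fun r hr k => by linarith [hr.1 k, hc k]) ?_
  rintro r ⟨-, hr⟩
  show ∑ k, r k ^ 2 ≤ ∑ k, logTrustRoot (q k) (c k) (b k) lam ^ 2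
  rw [← sqrt_le_sqrt_iff (by positivity)]
  exact hr.trans hnorm.ge

/-- with `r_k(λ) = (b_k − λ c_k + sqrt((b_k + λ c_k)² + 4 λ q_k))/(2λ)` for
`λ > 0`: each `r_k(λ)` is strictly positive, and if `‖r(λ)‖₂ = ρ` then `r(λ)` minimizes the
separable logarithmic trust-region objective `−∑ k q k log(r k + c k) − bᵀ r` over
`{r : r ≥ 0, ‖r‖₂ ≤ ρ}`. -/
theorem log_trust_region_solution (K : ℕ) (q c b : Fin K → ℝ)
    (hq : ∀ k, 0 < q k) (hc : ∀ k, 0 < c k) (hb : ∀ k, 0 < b k)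
    (ρ : ℝ) (hρ : 0 < ρ) (lam : ℝ) (hlam : 0 < lam) :
    (∀ k, 0 < (b k - lam * c k + Real.sqrt ((b k + lam * c k) ^ 2 + 4 * lam * q k))
        / (2 * lam)) ∧
    (Real.sqrt (∑ k, ((b k - lam * c k +
          Real.sqrt ((b k + lam * c k) ^ 2 + 4 * lam * q k)) / (2 * lam)) ^ 2) = ρ →
      ((∀ k, (0 : ℝ) ≤ (b k - lam * c k +
            Real.sqrt ((b k + lam * c k) ^ 2 + 4 * lam * q k)) / (2 * lam)) ∧
        Real.sqrt (∑ k, ((b k - lam * c k +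
            Real.sqrt ((b k + lam * c k) ^ 2 + 4 * lam * q k)) / (2 * lam)) ^ 2) ≤ ρ) ∧
      IsMinOn
        (fun r : Fin K → ℝ => -∑ k, q k * Real.log (r k + c k) - ∑ k, b k * r k)
        {r : Fin K → ℝ | (∀ k, 0 ≤ r k) ∧ Real.sqrt (∑ k, r k ^ 2) ≤ ρ}
        (fun k => (b k - lam * c k +
            Real.sqrt ((b k + lam * c k) ^ 2 + 4 * lam * q k)) / (2 * lam))) :=
  log_trust_region_solution_general K q c b hq hc hb ρ lam hlam
end
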